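/- Let m₁, m₂ ≥ 2 be integers with 1/m₁ + 1/m₂ < 1, let a = (m₁m₂ − m₁ + m₂)/(2m₁m₂) and b = (m₁m₂ − m₁ − m₂)/(2m₁m₂), and let p be a prime number coprime to 2m₁m₂. Then {δ_p(a), δ_p(b)} = {a, b} or {δ_p(a), δ_p(b)} = {1−a, 1−b} (as unordered pairs) if and only if there exist ε ∈ {1,−1} and ε′ ∈ {1,−1} such that either (p ≡ ε (mod 2m₁) and p ≡ ε′ε (mod 2m₂)) or (p ≡ m₁ + ε (mod 2m₁) and p ≡ m₂ + ε′ε (mod 2m₂)). -/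

import Mathlib

open PowerSeries

noncomputable section

/-- Formal exponential `exp(u) = ∑ uᵏ/k!` of a power series `u`
(intended for `u` with zero constant term, where the coefficientwise sum is finite). -/
def psExp {K : Type*} [Field K] (u : PowerSeries K) : PowerSeries K :=
  PowerSeries.mk fun n =>
    ∑ k ∈ Finset.range (n + 1), (PowerSeries.coeff (R := K) n (u ^ k)) / (Nat.factorial k : K)

/-- Formal logarithm `log(1 + v) = ∑_{k≥1} (-1)^{k+1} vᵏ/k` of a power series `v`
with zero constant term. -/
def psLog {K : Type*} [Field K] (v : PowerSeries K) : PowerSeries K :=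
  PowerSeries.mk fun n =>
    ∑ k ∈ Finset.Icc 1 n, ((-1 : K) ^ (k + 1)) * (PowerSeries.coeff (R := K) n (v ^ k)) / (k : K)

/-- Substitution `z ↦ z^p` in a formal power series: `(psSubstPow p f)(z) = f(z^p)`. -/
def psSubstPow {K : Type*} [Field K] (p : ℕ) (f : PowerSeries K) : PowerSeries K :=
  PowerSeries.mk fun n => if p ∣ n then PowerSeries.coeff (R := K) (n / p) f else 0

/-- Gauss hypergeometric series `F(a,b|z) = ∑_n (a)_n (b)_n / (n!)² · zⁿ`. -/
def hgF (a b : ℚ) : PowerSeries ℚ :=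
  PowerSeries.mk fun n =>
    (ascPochhammer ℚ n).eval a * (ascPochhammer ℚ n).eval b / (Nat.factorial n : ℚ) ^ 2

/-- `G(a,b|z) = ∑_n (a)_n (b)_n / (n!)² · (∑_{i<n} (1/(a+i) + 1/(b+i) - 2/(1+i))) · zⁿ`. -/
def hgG (a b : ℚ) : PowerSeries ℚ :=
  PowerSeries.mk fun n =>
    (ascPochhammer ℚ n).eval a * (ascPochhammer ℚ n).eval b / (Nat.factorial n : ℚ) ^ 2 *
      ∑ i ∈ Finset.range n, (1 / (a + (i : ℚ)) + 1 / (b + (i : ℚ)) - 2 / (1 + (i : ℚ)))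

/-- The Schwarz map `D(a,b|z) = G(a,b|z)/F(a,b|z)`. -/
def hgD (a b : ℚ) : PowerSeries ℚ := hgG a b * (hgF a b)⁻¹

/-- `q(a,b|z) = z · exp(D(a,b|z))`. -/
def hgq (a b : ℚ) : PowerSeries ℚ := PowerSeries.X * psExp (hgD a b)

/-- The Dwork map `δ_p(x)`: the unique rational `y` with denominator coprime to `p`
such that `p·y - x` is an integer in `{0, …, p-1}`; explicitly `y = (x + k)/p` where
`k ∈ {0, …, p-1}` satisfies `k ≡ -x (mod p)`. -/
def dwork (p : ℕ) (x : ℚ) : ℚ :=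
  (x + (((-(x.num : ZMod p)) * ((x.den : ZMod p))⁻¹).val : ℚ)) / p

/-- `f` is `p`-integral: every coefficient is a rational number with denominator
coprime to `p`, i.e. lies in `ℤ_(p)`. -/
def pIntegral (p : ℕ) (f : PowerSeries ℚ) : Prop :=
  ∀ n, ¬ (p ∣ (PowerSeries.coeff (R := ℚ) n f).den)

/-! For `x = A/T`, `y = B/T` with `0 ≤ A, B < T` and `p ∤ T`, `δ_p(x) = y` exactly when
`p B ≡ A (mod T)`. With `T = 2m₁m₂` and `H = m₁(m₂ - 1)` the numerators of `a, b` are `H ± m₂`,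
and each of the four pair conditions reads `p(H ± m₂) ≡ ηH ± εm₂ (mod T)` for signs `ε, η`.
Putting `X = (p - η)H` and `Y = (p - ε)m₂`, this says `X + Y ≡ X - Y ≡ 0 (mod 2m₁m₂)`, i.e.
`X ≡ Y ≡ 0` or `X ≡ Y ≡ m₁m₂`; as `p` is odd these are the two branches of the congruences. -/

theorem Int.modEq_iff_modEq_of_sub_eq {n a b c d : ℤ} (h : b - a = d - c) :
    a ≡ b [ZMOD n] ↔ c ≡ d [ZMOD n] := by
  rw [Int.modEq_iff_dvd, Int.modEq_iff_dvd, h]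

theorem Int.modEq_mul_modulus_iff_of_sub_eq {M n x y u v r : ℤ} (hM : M ≠ 0)
    (h : y - x = M * (v - u) + M * n * r) : x ≡ y [ZMOD M * n] ↔ u ≡ v [ZMOD n] := by
  rw [Int.modEq_iff_dvd, Int.modEq_iff_dvd, h, dvd_add_left (dvd_mul_right _ _),
    mul_dvd_mul_iff_left hM]

theorem Int.add_modEq_zero_and_sub_modEq_zero_iff {K X Y : ℤ} :
    (X + Y ≡ 0 [ZMOD 2 * K] ∧ X - Y ≡ 0 [ZMOD 2 * K]) ↔
      (X ≡ 0 [ZMOD 2 * K] ∧ Y ≡ 0 [ZMOD 2 * K]) ∨ (X ≡ K [ZMOD 2 * K] ∧ Y ≡ K [ZMOD 2 * K]) := by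
  constructor
  · rintro ⟨hsum, hdiff⟩
    have hYX : Y ≡ X [ZMOD 2 * K] := Int.modEq_iff_dvd.2 (Int.modEq_zero_iff_dvd.1 hdiff)
    obtain ⟨q, hq⟩ : K ∣ X := by
      have h2X := Int.modEq_zero_iff_dvd.1 (hsum.add hdiff)
      rw [show X + Y + (X - Y) = 2 * X by ring] at h2X
      exact Int.dvd_of_mul_dvd_mul_left two_ne_zero h2X
    rcases Int.even_or_odd' q with ⟨r, rfl | rfl⟩
    · have hX : X ≡ 0 [ZMOD 2 * K] := Int.modEq_zero_iff_dvd.2 ⟨r, by rw [hq]; ring⟩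
      exact .inl ⟨hX, hYX.trans hX⟩
    · have hX : X ≡ K [ZMOD 2 * K] := Int.modEq_iff_dvd.2 ⟨-r, by rw [hq]; ring⟩
      exact .inr ⟨hX, hYX.trans hX⟩
  · rintro (⟨hX, hY⟩ | ⟨hX, hY⟩)
    · exact ⟨by simpa using hX.add hY, by simpa using hX.sub hY⟩
    · exact ⟨(hX.add hY).trans (Int.modEq_zero_iff_dvd.2 ⟨1, by ring⟩), by simpa using hX.sub hY⟩

theorem dwork_eq_iff {p : ℕ} (hp : p.Prime) {x y : ℚ} (hx : ¬ p ∣ x.den) (hy : ¬ p ∣ y.den) :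
    dwork p x = y ↔ ∃ k : ℕ, k < p ∧ (p : ℚ) * y - x = k := by
  have : Fact p.Prime := ⟨hp⟩
  have hp0 : (p : ℚ) ≠ 0 := by exact_mod_cast hp.ne_zero
  set w : ZMod p := -(x.num : ZMod p) * (x.den : ZMod p)⁻¹
  have hdwork : dwork p x = (x + w.val) / p := rfl
  constructor
  · rintro rfl
    exact ⟨w.val, ZMod.val_lt w, by rw [hdwork]; field_simp; ring⟩
  · rintro ⟨k, hkp, hk⟩
    have hdvd : (p : ℤ) ∣ x.num + k * x.den := by
      have hprod : (p * y.num * x.den : ℤ) = (x.num + k * x.den) * y.den := by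
        qify
        rw [← Rat.mul_den_eq_num y, ← Rat.mul_den_eq_num x]
        linear_combination ((x.den : ℚ) * y.den) * hk
      have hyZ : ¬ (p : ℤ) ∣ y.den := by exact_mod_cast hy
      exact ((Nat.prime_iff_prime_int.mp hp).dvd_or_dvd
        ⟨y.num * x.den, by rw [← hprod]; ring⟩).resolve_right hyZ
    have hkw : (k : ZMod p) = w := by
      have hden : (x.den : ZMod p) ≠ 0 := by rwa [Ne, ZMod.natCast_eq_zero_iff]
      have hzero := (ZMod.intCast_zmod_eq_zero_iff_dvd _ p).2 hdvd
      push_cast at hzero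
      rw [eq_mul_inv_iff_mul_eq₀ hden]
      linear_combination hzero
    rw [hdwork, ← hkw, ZMod.val_cast_of_lt hkp, eq_comm, eq_div_iff hp0]
    linarith

theorem dwork_intCast_div_eq_div_iff {p : ℕ} (hp : p.Prime) {T A B : ℤ} (hT : ¬ (p : ℤ) ∣ T)
    (hA : A ∈ Set.Ico 0 T) (hB : B ∈ Set.Ico 0 T) :
    dwork p (A / T) = B / T ↔ (p : ℤ) * B ≡ A [ZMOD T] := by
  obtain ⟨hA₀, hAT⟩ := hA
  obtain ⟨hB₀, hBT⟩ := hB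
  have hT₀ : 0 < T := hA₀.trans_lt hAT
  have hden (C : ℤ) : ¬ p ∣ ((C : ℚ) / T).den := fun h ↦
    hT ((Int.natCast_dvd_natCast.2 h).trans (by rw [← Rat.divInt_eq_div]; exact Rat.den_dvd C T))
  have hTq : (T : ℚ) ≠ 0 := by exact_mod_cast hT₀.ne'
  have hsub : (p : ℚ) * (B / T) - A / T = ((p * B - A : ℤ) : ℚ) / T := by push_cast; ring
  rw [dwork_eq_iff hp (hden A) (hden B), hsub, Int.modEq_iff_dvd]
  constructor
  · rintro ⟨k, -, hk⟩
    refine ⟨-k, ?_⟩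
    rw [div_eq_iff hTq] at hk
    have : (p * B - A : ℤ) = k * T := by exact_mod_cast hk
    linarith
  · rintro ⟨k, hk⟩
    have hk' : (p : ℤ) * B - A = T * -k := by linarith
    have hpB : 0 ≤ (p : ℤ) * B := mul_nonneg (Nat.cast_nonneg p) hB₀
    have hpB' : (p : ℤ) * B < T * p := by
      rw [mul_comm T]; exact mul_lt_mul_of_pos_left hBT (by exact_mod_cast hp.pos)
    have hk₀ : -1 < -k := lt_of_mul_lt_mul_left (by linarith) hT₀.le
    have hkp : -k < p := lt_of_mul_lt_mul_left (by linarith) hT₀.le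
    lift -k to ℕ using (by omega) with n
    refine ⟨n, by exact_mod_cast hkp, ?_⟩
    rw [hk', div_eq_iff hTq]
    push_cast; ring

theorem dwork_intCast_div_eq_one_sub_div_iff {p : ℕ} (hp : p.Prime) {T A B : ℤ}
    (hT : ¬ (p : ℤ) ∣ T) (hA : A ∈ Set.Ico 0 T) (hB : B ∈ Set.Ioc 0 T) :
    dwork p (A / T) = 1 - B / T ↔ (p : ℤ) * B ≡ -A [ZMOD T] := by
  have hTq : (T : ℚ) ≠ 0 := by exact_mod_cast (hA.1.trans_lt hA.2).ne'
  have hsub : 1 - (B : ℚ) / T = ((T - B : ℤ) : ℚ) / T := by push_cast; field_simp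
  rw [hsub, dwork_intCast_div_eq_div_iff hp hT hA ⟨by linarith [hB.2], by linarith [hB.1]⟩,
    show (p : ℤ) * (T - B) = -(p * B) + T * p by ring, Int.add_modulus_mul_modEq_iff,
    ← Int.neg_modEq_neg, neg_neg]

theorem pair_modEq_iff {M N P ε η A B : ℤ} (hM : M ≠ 0) (hN : N ≠ 0) (hP : Even (P - η))
    (hA : A = η * (M * N - M) + ε * N) (hB : B = η * (M * N - M) - ε * N) :
    (P * (M * N - M + N) ≡ A [ZMOD 2 * M * N] ∧ P * (M * N - M - N) ≡ B [ZMOD 2 * M * N]) ↔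
      (P ≡ ε [ZMOD 2 * M] ∧ P ≡ η [ZMOD 2 * N]) ∨
        (P ≡ M + ε [ZMOD 2 * M] ∧ P ≡ N + η [ZMOD 2 * N]) := by
  obtain ⟨r, hr⟩ := hP
  set X := (P - η) * (M * N - M)
  set Y := (P - ε) * N
  -- `P - η = 2r` makes `X ≡ M * (η - P)` modulo `2MN`
  have hX (c : ℤ) : X ≡ c * (M * N) [ZMOD 2 * (M * N)] ↔ P ≡ c * N + η [ZMOD 2 * N] := by
    rw [show 2 * (M * N) = M * (2 * N) by ring, Int.modEq_comm (a := P)]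
    exact Int.modEq_mul_modulus_iff_of_sub_eq hM (r := c - r)
      (by simp only [X]; linear_combination -M * N * hr)
  have hY (c : ℤ) : Y ≡ c * (M * N) [ZMOD 2 * (M * N)] ↔ P ≡ c * M + ε [ZMOD 2 * M] := by
    rw [show 2 * (M * N) = N * (2 * M) by ring]
    exact Int.modEq_mul_modulus_iff_of_sub_eq hN (r := 0) (by simp only [Y]; ring)
  have hsum : P * (M * N - M + N) ≡ A [ZMOD 2 * M * N] ↔ X + Y ≡ 0 [ZMOD 2 * M * N] :=
    Int.modEq_iff_modEq_of_sub_eq (by rw [hA]; ring)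
  have hdiff : P * (M * N - M - N) ≡ B [ZMOD 2 * M * N] ↔ X - Y ≡ 0 [ZMOD 2 * M * N] :=
    Int.modEq_iff_modEq_of_sub_eq (by rw [hB]; ring)
  rw [hsum, hdiff, mul_assoc, Int.add_modEq_zero_and_sub_modEq_zero_iff]
  simpa only [zero_mul, one_mul, zero_add, and_comm] using
    or_congr (and_congr (hX 0) (hY 0)) (and_congr (hX 1) (hY 1))

theorem pair_modEq_signs_iff {M N P : ℤ} (hM : M ≠ 0) (hN : N ≠ 0) (hP : Odd P) :
    ((P * (M * N - M + N) ≡ M * N - M + N [ZMOD 2 * M * N] ∧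
        P * (M * N - M - N) ≡ M * N - M - N [ZMOD 2 * M * N]) ∨
      (P * (M * N - M - N) ≡ M * N - M + N [ZMOD 2 * M * N] ∧
        P * (M * N - M + N) ≡ M * N - M - N [ZMOD 2 * M * N]) ∨
      (P * (M * N - M + N) ≡ -(M * N - M + N) [ZMOD 2 * M * N] ∧
        P * (M * N - M - N) ≡ -(M * N - M - N) [ZMOD 2 * M * N]) ∨
      (P * (M * N - M - N) ≡ -(M * N - M + N) [ZMOD 2 * M * N] ∧
        P * (M * N - M + N) ≡ -(M * N - M - N) [ZMOD 2 * M * N])) ↔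
      ∃ ε ε' : ℤ, (ε = 1 ∨ ε = -1) ∧ (ε' = 1 ∨ ε' = -1) ∧
        ((P ≡ ε [ZMOD 2 * M] ∧ P ≡ ε' * ε [ZMOD 2 * N]) ∨
          (P ≡ M + ε [ZMOD 2 * M] ∧ P ≡ N + ε' * ε [ZMOD 2 * N])) := by
  have hP₁ : Even (P - 1) := hP.sub_odd odd_one
  have hP₂ : Even (P - -1) := hP.sub_odd odd_neg_one
  refine (or_congr (pair_modEq_iff (ε := 1) (η := 1) hM hN hP₁ (by ring) (by ring)) <|
    or_congr (and_comm.trans (pair_modEq_iff (ε := -1) (η := 1) hM hN hP₁ (by ring) (by ring))) <|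
    or_congr (pair_modEq_iff (ε := -1) (η := -1) hM hN hP₂ (by ring) (by ring))
      (and_comm.trans (pair_modEq_iff (ε := 1) (η := -1) hM hN hP₂ (by ring) (by ring)))).trans ?_
  constructor
  · rintro (h | h | h | h)
    exacts [⟨1, 1, .inl rfl, .inl rfl, by simpa⟩, ⟨-1, -1, .inr rfl, .inr rfl, by simpa⟩,
      ⟨-1, 1, .inr rfl, .inl rfl, by simpa⟩, ⟨1, -1, .inl rfl, .inr rfl, by simpa⟩]
  · rintro ⟨ε, ε', rfl | rfl, rfl | rfl, h⟩ <;> simp_all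

/-- The Dwork map fixes `{a, b}` or sends it to `{1-a, 1-b}` iff the congruence
conditions of the main theorem hold. -/
theorem dwork_pair_iff_congruences (m₁ m₂ : ℕ) (hm₁ : 2 ≤ m₁) (hm₂ : 2 ≤ m₂)
    (hhyp : (1 : ℚ) / m₁ + 1 / m₂ < 1) (a b : ℚ)
    (ha : a = ((m₁ : ℚ) * m₂ - m₁ + m₂) / (2 * m₁ * m₂))
    (hb : b = ((m₁ : ℚ) * m₂ - m₁ - m₂) / (2 * m₁ * m₂))
    (p : ℕ) (hp : p.Prime) (hcop : Nat.Coprime p (2 * m₁ * m₂)) :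
    ((dwork p a = a ∧ dwork p b = b) ∨ (dwork p a = b ∧ dwork p b = a) ∨
      (dwork p a = 1 - a ∧ dwork p b = 1 - b) ∨ (dwork p a = 1 - b ∧ dwork p b = 1 - a)) ↔
      ∃ ε ε' : ℤ, (ε = 1 ∨ ε = -1) ∧ (ε' = 1 ∨ ε' = -1) ∧
        (((p : ℤ) ≡ ε [ZMOD (2 * m₁ : ℤ)] ∧ (p : ℤ) ≡ ε' * ε [ZMOD (2 * m₂ : ℤ)]) ∨
          ((p : ℤ) ≡ (m₁ : ℤ) + ε [ZMOD (2 * m₁ : ℤ)] ∧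
            (p : ℤ) ≡ (m₂ : ℤ) + ε' * ε [ZMOD (2 * m₂ : ℤ)])) := by
  have hpT : ¬ (p : ℤ) ∣ 2 * m₁ * m₂ := by
    exact_mod_cast (Nat.Prime.coprime_iff_not_dvd hp).1 hcop
  have hp₂ : p ≠ 2 := by rintro rfl; exact hpT (dvd_mul_of_dvd_left (dvd_mul_right 2 _) _)
  have hMN : (m₁ : ℤ) + m₂ < m₁ * m₂ := by
    rw [div_add_div _ _ (by positivity) (by positivity), div_lt_one (by positivity)] at hhyp
    exact_mod_cast (by linarith : (m₁ : ℚ) + m₂ < m₁ * m₂)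
  have ha' : a = (((m₁ : ℤ) * m₂ - m₁ + m₂ : ℤ) : ℚ) / ((2 * m₁ * m₂ : ℤ) : ℚ) := by
    rw [ha]; push_cast; ring
  have hb' : b = (((m₁ : ℤ) * m₂ - m₁ - m₂ : ℤ) : ℚ) / ((2 * m₁ * m₂ : ℤ) : ℚ) := by
    rw [hb]; push_cast; ring
  set M : ℤ := (m₁ : ℤ)
  set N : ℤ := (m₂ : ℤ)
  have hα : M * N - M + N ∈ Set.Ioo 0 (2 * M * N) := ⟨by nlinarith, by nlinarith⟩
  have hβ : M * N - M - N ∈ Set.Ioo 0 (2 * M * N) := ⟨by linarith, by nlinarith⟩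
  have hdiv {A B : ℤ} (hA : A ∈ Set.Ioo 0 (2 * M * N)) (hB : B ∈ Set.Ioo 0 (2 * M * N)) :=
    dwork_intCast_div_eq_div_iff hp hpT (Set.Ioo_subset_Ico_self hA) (Set.Ioo_subset_Ico_self hB)
  have hsub {A B : ℤ} (hA : A ∈ Set.Ioo 0 (2 * M * N)) (hB : B ∈ Set.Ioo 0 (2 * M * N)) :=
    dwork_intCast_div_eq_one_sub_div_iff hp hpT (Set.Ioo_subset_Ico_self hA)
      (Set.Ioo_subset_Ioc_self hB)
  rw [ha', hb', hdiv hα hα, hdiv hβ hβ, hdiv hα hβ, hdiv hβ hα, hsub hα hα, hsub hβ hβ, hsub hα hβ,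
    hsub hβ hα]
  exact pair_modEq_signs_iff (by omega) (by omega) (hp.odd_of_ne_two hp₂).natCast
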